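/- Let q, a, z ∈ ℂ and let n, k be nonnegative integers such that q^j ≠ 1 for 1 ≤ j ≤ k+1 and a q^n ≠ 1. Define G'(n, k) = − a q^n (1 − q^k) (a q^n;q)_k z^k / ((1 − a q^n)(q;q)_k). Then the WZ certificate identity for the q-binomial theorem holds: (1 − a z q^n)·(a q^{n+1};q)_k z^k / (q;q)_k − (a q^n;q)_k z^k / (q;q)_k = G'(n, k+1) − G'(n, k). -/

import Mathlib

/-!
Dividing out the common factor `(a q^n;q)_k z^k / ((1 - a q^n)(q;q)_k)` reduces the identity to a
polynomial one: `(a q^{n+1};q)_k` is `(a q^n;q)_{k+1} / (1 - a q^n)`, and the factor `1 - q^{k+1}`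
of `G'(n, k+1)` cancels against the last factor of `(q;q)_{k+1}`.
-/

/-- The finite q-shifted factorial `(a;q)_n = ∏_{j=0}^{n-1} (1 - a q^j)`. -/
noncomputable def qPoch (q a : ℂ) (n : ℕ) : ℂ := ∏ j ∈ Finset.range n, (1 - a * q ^ j)

/-- The WZ certificate `G'(n, k) = - a q^n (1-q^k) (a q^n;q)_k z^k / ((1-a q^n)(q;q)_k)`
for the q-binomial theorem. -/
noncomputable def G' (q a z : ℂ) (n k : ℕ) : ℂ :=
  -(a * q ^ n * (1 - q ^ k) * qPoch q (a * q ^ n) k * z ^ k) /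
    ((1 - a * q ^ n) * qPoch q q k)

lemma qPoch_succ (q a : ℂ) (k : ℕ) : qPoch q a (k + 1) = qPoch q a k * (1 - a * q ^ k) :=
  Finset.prod_range_succ _ _

lemma qPoch_succ' (q a : ℂ) (k : ℕ) : qPoch q a (k + 1) = (1 - a) * qPoch q (a * q) k := by
  rw [qPoch, qPoch, Finset.prod_range_succ', pow_zero, mul_one, mul_comm]
  exact congrArg _ (Finset.prod_congr rfl fun j _ => by ring)

lemma qPoch_ne_zero {q a : ℂ} {k : ℕ} (h : ∀ j < k, a * q ^ j ≠ 1) : qPoch q a k ≠ 0 :=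
  Finset.prod_ne_zero_iff.mpr fun j hj => sub_ne_zero.mpr (h j (Finset.mem_range.mp hj)).symm

/-- The WZ certificate identity (3.10) for the q-binomial theorem. -/
theorem q_binomial_wz_certificate (q a z : ℂ) (n k : ℕ)
    (hq : ∀ j : ℕ, 1 ≤ j → j ≤ k + 1 → q ^ j ≠ 1) (ha : a * q ^ n ≠ 1) :
    (1 - a * z * q ^ n) * (qPoch q (a * q ^ (n + 1)) k * z ^ k / qPoch q q k)
        - qPoch q (a * q ^ n) k * z ^ k / qPoch q q k =
      G' q a z n (k + 1) - G' q a z n k := by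
  have hA : 1 - a * q ^ n ≠ 0 := sub_ne_zero.mpr ha.symm
  have hQ : qPoch q q k ≠ 0 :=
    qPoch_ne_zero fun j hj => by rw [← pow_succ']; exact hq (j + 1) (by omega) (by omega)
  have hqk : 1 - q ^ (k + 1) ≠ 0 := sub_ne_zero.mpr (hq (k + 1) (by omega) le_rfl).symm
  have hshift : qPoch q (a * q ^ (n + 1)) k =
      qPoch q (a * q ^ n) k * (1 - a * q ^ n * q ^ k) / (1 - a * q ^ n) := by
    rw [eq_div_iff hA, mul_comm, ← qPoch_succ, qPoch_succ', pow_succ, mul_assoc]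
  rw [G', G', qPoch_succ q q, ← pow_succ', qPoch_succ q (a * q ^ n), hshift]
  field_simp
  ring
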